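/- arXiv:2008.10793 — 5 statements merged into one kernel-verified Lean document; each statement's English description precedes it below -/
import Mathlib

section
/- Let R be a commutative ring, n ≥ 3, and 1 ≤ i ≤ n−2. For all a, b, c ∈ R one has the braid identity R_i(a)·R_{i+1}(b)·R_i(c) = R_{i+1}(c)·R_i(ac − b)·R_{i+1}(a) in Mat_n(R). -/
/-! Writing `R_i(q)` as the identity plus a combination of matrix units in the two coordinates it
moves, the braid relation holds for any three distinct coordinates `j, k, l`, and is checked by
multiplying out matrix units and comparing coefficients. -/

/-- `Rmat n i q` is the identity matrix except that its 2×2 submatrix in rows and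
columns `i`, `i+1` (1-based) is `[[q, -1], [1, 0]]`. -/
def Rmat {R : Type*} [CommRing R] (n i : ℕ) (q : R) : Matrix (Fin n) (Fin n) R :=
  Matrix.of fun a c =>
    if (a : ℕ) + 1 = i ∧ (c : ℕ) + 1 = i then q
    else if (a : ℕ) + 1 = i ∧ (c : ℕ) = i then -1
    else if (a : ℕ) = i ∧ (c : ℕ) + 1 = i then 1
    else if (a : ℕ) = i ∧ (c : ℕ) = i then 0
    else if a = c then 1 else 0

open Matrix

namespace Matrix

variable {ι R : Type*} [Fintype ι] [DecidableEq ι] [CommRing R]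

def braidBlock (j k : ι) (q : R) : Matrix ι ι R :=
  1 + (q - 1) • single j j 1 - single j k 1 + single k j 1 - single k k 1

theorem braidBlock_braid {j k l : ι} (hjk : j ≠ k) (hjl : j ≠ l) (hkl : k ≠ l) (a b c : R) :
    braidBlock j k a * braidBlock k l b * braidBlock j k c
      = braidBlock k l c * braidBlock j k (a * c - b) * braidBlock k l a := by
  simp only [braidBlock, mul_add, add_mul, mul_sub, sub_mul, smul_mul_assoc, Matrix.mul_smul,
    one_mul, mul_one, single_mul_single_same, single_mul_single_of_ne, hjk, hjk.symm, hjl,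
    hjl.symm, hkl, hkl.symm, ne_eq, not_false_iff, smul_zero, sub_zero, add_zero, smul_smul]
  match_scalars <;> ring

end Matrix

theorem Rmat_eq_braidBlock {R : Type*} [CommRing R] {n i : ℕ} (j k : Fin n)
    (hj : (j : ℕ) + 1 = i) (hk : (k : ℕ) = i) (q : R) :
    Rmat n i q = braidBlock j k q := by
  ext x y
  simp only [Rmat, braidBlock, of_apply, Matrix.add_apply, Matrix.sub_apply, Matrix.smul_apply,
    one_apply, single, Fin.ext_iff, smul_eq_mul]
  split_ifs <;> first | (exfalso; omega) | ring1

theorem Rmat_braid_general {R : Type*} [CommRing R] {n : ℕ}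
    (i : ℕ) (hi1 : 1 ≤ i) (hi2 : i ≤ n - 2) (a b c : R) :
    Rmat n i a * Rmat n (i + 1) b * Rmat n i c
      = Rmat n (i + 1) c * Rmat n i (a * c - b) * Rmat n (i + 1) a := by
  let j : Fin n := ⟨i - 1, by omega⟩
  let k : Fin n := ⟨i, by omega⟩
  let l : Fin n := ⟨i + 1, by omega⟩
  have hj : (j : ℕ) + 1 = i := Nat.sub_add_cancel hi1
  have hjk : j ≠ k := Fin.ne_of_val_ne (show i - 1 ≠ i by omega)
  have hjl : j ≠ l := Fin.ne_of_val_ne (show i - 1 ≠ i + 1 by omega)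
  have hkl : k ≠ l := Fin.ne_of_val_ne (show i ≠ i + 1 by omega)
  simp only [Rmat_eq_braidBlock (i := i) j k hj rfl, Rmat_eq_braidBlock (i := i + 1) k l rfl rfl]
  exact braidBlock_braid hjk hjl hkl a b c

theorem Rmat_braid {R : Type*} [CommRing R] {n : ℕ} (hn : 3 ≤ n)
    (i : ℕ) (hi1 : 1 ≤ i) (hi2 : i ≤ n - 2) (a b c : R) :
    Rmat n i a * Rmat n (i + 1) b * Rmat n i c
      = Rmat n (i + 1) c * Rmat n i (a * c - b) * Rmat n (i + 1) a :=
  Rmat_braid_general i hi1 hi2 a b c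
end

section
/- Let R be a commutative ring of characteristic 2, n ≥ 2, 1 ≤ i ≤ n−1, b ∈ R, and let L ∈ Mat_n(R) be strictly lower triangular. Set b' = b + L_{i+1,i}. Then Z_i(b)·(I + L)·Z_i(b')⁻¹ is lower unitriangular, i.e., all of its entries strictly above the diagonal vanish and all of its diagonal entries equal 1. -/
/-!
Write `p = i - 1` and `q = i` for the two (0-based) indices of the block. Then `Z_i(b)` is the
swap matrix `S` of `p, q` times the transvection `T(b) = I + b E_{qp}`, so
`Z_i(b) (I + L) Z_i(b')⁻¹ = S N S` with `N = T(b) (I + L) T(-b')` lower unitriangular.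
The entry `N_{qp} = L_{qp} + b - b'` vanishes, and since `p ⋖ q`, conjugating by `S` moves every
entry above the diagonal to a place above the diagonal, except the `(p, q)` entry, which comes
from `N_{qp}`.
-/

/-- `Zmat n i b` is the identity matrix except that its 2×2 submatrix in rows and
columns `i`, `i+1` (1-based) is `[[b, 1], [1, 0]]`. -/
def Zmat {R : Type*} [CommRing R] (n i : ℕ) (b : R) : Matrix (Fin n) (Fin n) R :=
  Matrix.of fun a c =>
    if (a : ℕ) + 1 = i ∧ (c : ℕ) + 1 = i then b
    else if (a : ℕ) + 1 = i ∧ (c : ℕ) = i then 1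
    else if (a : ℕ) = i ∧ (c : ℕ) + 1 = i then 1
    else if (a : ℕ) = i ∧ (c : ℕ) = i then 0
    else if a = c then 1 else 0

theorem Equiv.swap_apply_lt_swap_apply_of_covBy {α : Type*} [LinearOrder α] [DecidableEq α]
    {p q a c : α} (hpq : p ⋖ q) (hac : a < c) (hne : ¬(a = p ∧ c = q)) :
    swap p q a < swap p q c := by
  rw [swap_apply_def, swap_apply_def]
  split_ifs <;> grind [CovBy]

namespace Matrix

variable {m R : Type*} [CommRing R]

section Fintype

variable [Fintype m] [DecidableEq m]

theorem transvection_mul_transvection_neg {i j : m} (hij : i ≠ j) (c : R) :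
    transvection i j c * transvection i j (-c) = 1 := by
  rw [transvection_mul_transvection_same _ _ hij, add_neg_cancel, transvection_zero]

theorem swap_mul_mul_swap (i j : m) (N : Matrix m m R) :
    swap R i j * N * swap R i j = N.submatrix (Equiv.swap i j) (Equiv.swap i j) := by
  simp [swap, Equiv.Perm.permMatrix, PEquiv.toMatrix_toPEquiv_mul, PEquiv.mul_toMatrix_toPEquiv]

end Fintype

variable [LinearOrder m]

def IsLowerUnitriangular (M : Matrix m m R) : Prop :=
  M.IsLowerTriangular ∧ ∀ a, M a a = 1

theorem IsLowerTriangular.mul_apply_self [Fintype m] {M N : Matrix m m R}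
    (hM : M.IsLowerTriangular) (hN : N.IsLowerTriangular) (a : m) :
    (M * N) a a = M a a * N a a := by
  rw [mul_apply]
  refine Fintype.sum_eq_single a fun x hx => ?_
  rcases hx.lt_or_gt with h | h
  · rw [hN h, mul_zero]
  · rw [hM h, zero_mul]

theorem IsLowerUnitriangular.mul [Fintype m] {M N : Matrix m m R}
    (hM : M.IsLowerUnitriangular) (hN : N.IsLowerUnitriangular) :
    (M * N).IsLowerUnitriangular :=
  ⟨hM.1.mul hN.1, fun a => by rw [hM.1.mul_apply_self hN.1, hM.2, hN.2, one_mul]⟩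

variable [DecidableEq m]

theorem isLowerUnitriangular_transvection {i j : m} (hij : j < i) (c : R) :
    (transvection i j c).IsLowerUnitriangular :=
  ⟨blockTriangular_transvection' (b := id) hij.le c, fun a => by
    simp only [transvection, add_apply, one_apply_eq, single_apply, add_eq_left, ite_eq_right_iff,
      and_imp]
    rintro rfl rfl
    exact (lt_irrefl _ hij).elim⟩

theorem isLowerUnitriangular_one_add {L : Matrix m m R} (hL : ∀ a c, a ≤ c → L a c = 0) :
    (1 + L).IsLowerUnitriangular :=
  ⟨blockTriangular_one.add fun a c h => hL a c h.le, fun a => by simp [hL a a le_rfl]⟩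

variable [Fintype m]

theorem IsLowerUnitriangular.transvection_mul_mul_transvection_apply {M : Matrix m m R}
    (hM : M.IsLowerUnitriangular) {p q : m} (hpq : p < q) (b c : R) :
    (transvection q p b * M * transvection q p c) q p = M q p + b + c := by
  rw [mul_transvection_apply_same, transvection_mul_apply_same, transvection_mul_apply_same,
    hM.2, hM.2, hM.1 hpq]
  ring

theorem IsLowerUnitriangular.swap_mul_mul_swap {N : Matrix m m R}
    (hN : N.IsLowerUnitriangular) {p q : m} (hpq : p ⋖ q) (hqp : N q p = 0) :
    (swap R p q * N * swap R p q).IsLowerUnitriangular := by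
  rw [Matrix.swap_mul_mul_swap]
  refine ⟨fun a c (hac : a < c) => ?_, fun a => hN.2 _⟩
  by_cases hne : a = p ∧ c = q
  · simpa [hne.1, hne.2] using hqp
  · exact hN.1 (Equiv.swap_apply_lt_swap_apply_of_covBy (α := m) hpq hac hne)

end Matrix

open Matrix

section Zmat

variable {R : Type*} [CommRing R] {n i : ℕ} {p q : Fin n}

theorem Zmat_eq_swap_mul_transvection (hp : (p : ℕ) + 1 = i) (hq : (q : ℕ) = i) (b : R) :
    Zmat n i b = swap R p q * transvection q p b := by
  ext a c
  simp only [Zmat, swap, Equiv.Perm.permMatrix, PEquiv.toMatrix_toPEquiv_mul, transvection,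
    of_apply, submatrix_apply, id, Equiv.swap_apply_def, Matrix.add_apply, one_apply, single_apply,
    Fin.ext_iff]
  split_ifs <;> first | omega | simp

theorem Zmat_inv (hp : (p : ℕ) + 1 = i) (hq : (q : ℕ) = i) (b : R) :
    (Zmat n i b)⁻¹ = transvection q p (-b) * swap R p q := by
  have hqp : q ≠ p := fun h => by rw [h] at hq; omega
  refine inv_eq_right_inv ?_
  rw [Zmat_eq_swap_mul_transvection hp hq, mul_assoc, ← mul_assoc (transvection q p b),
    transvection_mul_transvection_neg hqp, one_mul, swap_mul_self]

end Zmat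

/-- If `L` is strictly lower triangular and `b' = b + L_{i+1,i}` (1-based indices),
then `Z_i(b) (I + L) Z_i(b')⁻¹` is lower unitriangular. -/
theorem Zmat_conj_lower_unitriangular {R : Type*} [CommRing R] {n : ℕ}
    (i : ℕ) (hi1 : 1 ≤ i) (hi2 : i ≤ n - 1) (b : R)
    (L : Matrix (Fin n) (Fin n) R) (hL : ∀ a c : Fin n, a ≤ c → L a c = 0) :
    (∀ a c : Fin n, a < c →
        (Zmat n i b * (1 + L)
          * (Zmat n i (b + L ⟨i, by omega⟩ ⟨i - 1, by omega⟩))⁻¹) a c = 0) ∧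
    (∀ a : Fin n,
        (Zmat n i b * (1 + L)
          * (Zmat n i (b + L ⟨i, by omega⟩ ⟨i - 1, by omega⟩))⁻¹) a a = 1) := by
  set p : Fin n := ⟨i - 1, by omega⟩
  set q : Fin n := ⟨i, by omega⟩
  have hp : (p : ℕ) + 1 = i := Nat.sub_add_cancel hi1
  have hq : (q : ℕ) = i := rfl
  have hpq : p ⋖ q := Fin.covBy_iff.2 (Order.covBy_iff_add_one_eq.2 (hp.trans hq.symm))
  set N := transvection q p b * (1 + L) * transvection q p (-(b + L q p)) with hN_def
  have hN : N.IsLowerUnitriangular :=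
    ((isLowerUnitriangular_transvection hpq.lt b).mul (isLowerUnitriangular_one_add hL)).mul
      (isLowerUnitriangular_transvection hpq.lt _)
  have hNqp : N q p = 0 := by
    rw [hN_def, (isLowerUnitriangular_one_add hL).transvection_mul_mul_transvection_apply hpq.lt,
      Matrix.add_apply, one_apply_ne hpq.lt.ne']
    ring
  have hconj : Zmat n i b * (1 + L) * (Zmat n i (b + L q p))⁻¹ = swap R p q * N * swap R p q := by
    rw [Zmat_inv hp hq, Zmat_eq_swap_mul_transvection hp hq, hN_def]
    simp only [Matrix.mul_assoc]
  rw [hconj]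
  exact hN.swap_mul_mul_swap hpq hNqp
end

section
/- (Sylvester's determinant identity.) Let R be a commutative ring, M an n×n matrix over R, 1 ≤ k < n, and let i, j be indices with k < i, j ≤ n. Denote by M[S; T] the submatrix of M with row set S and column set T (in increasing order). Then det(M[{1,…,k,i}; {1,…,k,j}]) · det(M[{1,…,k−1}; {1,…,k−1}]) = det(M[{1,…,k−1,i}; {1,…,k−1,j}]) · det(M[{1,…,k}; {1,…,k}]) − det(M[{1,…,k−1,i}; {1,…,k}]) · det(M[{1,…,k}; {1,…,k−1,j}]). -/
/-- The `m`-th leading principal minor of a square matrix. -/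
def lead {R : Type*} [CommRing R] {n : ℕ} (M : Matrix (Fin n) (Fin n) R)
    (m : ℕ) (hm : m ≤ n) : R :=
  (M.submatrix (Fin.castLE hm) (Fin.castLE hm)).det

/-!
All minors in the identity are minors of the bordered matrix
`A = M[{1,…,k-1,k,i}; {1,…,k-1,k,j}]`, obtained by deleting some of its last two rows and columns,
so the identity is the Desnanot–Jacobi identity for `A`. That in turn is Jacobi's theorem on
complementary minors of the adjugate: for a block decomposition of `A` with lower right block of
size `r`, multiplying `A` by `[[1, (adj A)₁₂], [0, (adj A)₂₂]]` gives a block lower triangular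
matrix with diagonal blocks `A₁₁` and `det A • 1`, so
`det A * det (adj A)₂₂ = det A ^ r * det A₁₁`. The factor `det A` cancels for the generic matrix
over `ℤ[X_pq]`, and the result specialises to any commutative ring. Finally the entries of the
`2 × 2` block of `adj A` are cofactors, i.e. signed minors of `A`.
-/

namespace Fin

theorem snoc_snoc_comp_succAbove_castSucc_last {α : Type*} {m : ℕ} (f : Fin m → α) (x y : α) :
    (snoc (snoc f x) y : Fin (m + 2) → α) ∘ (last m).castSucc.succAbove = snoc f y := by
  funext s
  cases s using lastCases with
  | last => simp
  | cast s => simp [succAbove_of_castSucc_lt, castSucc_lt_last]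

end Fin

namespace Matrix

variable {R : Type*} [CommRing R]

section Jacobi

variable {ι κ : Type*} [Fintype ι] [Fintype κ] [DecidableEq ι] [DecidableEq κ]

theorem det_mul_det_toBlocks₂₂_adjugate (A : Matrix (ι ⊕ κ) (ι ⊕ κ) R) :
    A.det * A.adjugate.toBlocks₂₂.det = A.det ^ Fintype.card κ * A.toBlocks₁₁.det := by
  have hblocks := A.mul_adjugate
  nth_rewrite 1 [← fromBlocks_toBlocks A, ← fromBlocks_toBlocks A.adjugate] at hblocks
  rw [fromBlocks_multiply, ← fromBlocks_one, fromBlocks_smul] at hblocks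
  obtain ⟨-, h₁₂, -, h₂₂⟩ := fromBlocks_inj.mp hblocks
  have htriangular : A * fromBlocks 1 A.adjugate.toBlocks₁₂ 0 A.adjugate.toBlocks₂₂ =
      fromBlocks A.toBlocks₁₁ 0 A.toBlocks₂₁ (A.det • 1) := by
    nth_rewrite 1 [← fromBlocks_toBlocks A]
    rw [fromBlocks_multiply, h₁₂, h₂₂]
    simp
  simpa [det_fromBlocks_zero₂₁, det_fromBlocks_zero₁₂, mul_comm] using congrArg det htriangular

theorem det_toBlocks₂₂_adjugate [Nonempty κ] (A : Matrix (ι ⊕ κ) (ι ⊕ κ) R) :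
    A.adjugate.toBlocks₂₂.det = A.det ^ (Fintype.card κ - 1) * A.toBlocks₁₁.det := by
  let X := mvPolynomialX (ι ⊕ κ) (ι ⊕ κ) ℤ
  have hX : X.det * X.adjugate.toBlocks₂₂.det =
      X.det * (X.det ^ (Fintype.card κ - 1) * X.toBlocks₁₁.det) := by
    rw [det_mul_det_toBlocks₂₂_adjugate, ← mul_assoc, ← pow_succ',
      Nat.sub_add_cancel Fintype.card_pos]
  let f := MvPolynomial.aeval (R := ℤ) fun p : (ι ⊕ κ) × (ι ⊕ κ) => A p.1 p.2
  have hf : f.mapMatrix X = A := mvPolynomialX_mapMatrix_aeval ℤ A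
  have hA := congrArg f (mul_left_cancel₀ (det_mvPolynomialX_ne_zero _ ℤ) hX)
  rw [map_mul, map_pow, AlgHom.map_det, AlgHom.map_det, AlgHom.map_det] at hA
  rwa [← hf, ← AlgHom.map_adjugate]

end Jacobi

theorem desnanot_jacobi {m : ℕ} (A : Matrix (Fin (m + 2)) (Fin (m + 2)) R) :
    A.det * (A.submatrix (Fin.castSucc ∘ Fin.castSucc) (Fin.castSucc ∘ Fin.castSucc)).det =
      (A.submatrix (Fin.last m).castSucc.succAbove (Fin.last m).castSucc.succAbove).det *
          (A.submatrix (Fin.last (m + 1)).succAbove (Fin.last (m + 1)).succAbove).det -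
        (A.submatrix (Fin.last m).castSucc.succAbove (Fin.last (m + 1)).succAbove).det *
          (A.submatrix (Fin.last (m + 1)).succAbove (Fin.last m).castSucc.succAbove).det := by
  have hjacobi := det_toBlocks₂₂_adjugate (A.submatrix finSumFinEquiv finSumFinEquiv)
  have h₀ : (finSumFinEquiv (Sum.inr 0) : Fin (m + 2)) = (Fin.last m).castSucc := by ext; simp
  have h₁ : (finSumFinEquiv (Sum.inr 1) : Fin (m + 2)) = Fin.last (m + 1) := by ext; simp
  have h₁₁ : (A.submatrix finSumFinEquiv finSumFinEquiv).toBlocks₁₁ =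
      A.submatrix (Fin.castSucc ∘ Fin.castSucc) (Fin.castSucc ∘ Fin.castSucc) := by
    ext; rfl
  rw [adjugate_submatrix_equiv_self, det_submatrix_equiv_self, Fintype.card_fin, det_fin_two,
    h₁₁] at hjacobi
  simp only [toBlocks₂₂, of_apply, submatrix_apply, h₀, h₁,
    adjugate_fin_succ_eq_det_submatrix] at hjacobi
  have hodd : Odd (m + (m + 1)) := ⟨m, by ring⟩
  have hodd' : Odd (m + 1 + m) := ⟨m, by ring⟩
  simp only [Fin.val_last, Fin.val_castSucc, Even.neg_one_pow ⟨m, rfl⟩,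
    Even.neg_one_pow ⟨m + 1, rfl⟩, hodd.neg_one_pow, hodd'.neg_one_pow] at hjacobi
  linear_combination -hjacobi

theorem det_submatrix_snoc_snoc_mul_det_submatrix {α β : Type*} {m : ℕ} (M : Matrix α β R)
    (f : Fin m → α) (g : Fin m → β) (x y : α) (u v : β) :
    (M.submatrix (Fin.snoc (Fin.snoc f x) y : Fin (m + 2) → α)
          (Fin.snoc (Fin.snoc g u) v : Fin (m + 2) → β)).det * (M.submatrix f g).det =
      (M.submatrix (Fin.snoc f y : Fin (m + 1) → α) (Fin.snoc g v : Fin (m + 1) → β)).det *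
          (M.submatrix (Fin.snoc f x : Fin (m + 1) → α) (Fin.snoc g u : Fin (m + 1) → β)).det -
        (M.submatrix (Fin.snoc f y : Fin (m + 1) → α) (Fin.snoc g u : Fin (m + 1) → β)).det *
          (M.submatrix (Fin.snoc f x : Fin (m + 1) → α) (Fin.snoc g v : Fin (m + 1) → β)).det := by
  have h := desnanot_jacobi (M.submatrix (Fin.snoc (Fin.snoc f x) y : Fin (m + 2) → α)
    (Fin.snoc (Fin.snoc g u) v : Fin (m + 2) → β))
  simpa only [submatrix_submatrix, ← Function.comp_assoc, Fin.snoc_comp_castSucc,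
    Fin.succAbove_last, Fin.snoc_snoc_comp_succAbove_castSucc_last] using h

end Matrix

/-- Sylvester's determinant identity.  Here indices `i`, `j` are 0-based
(`k ≤ i, j` corresponds to `k < i, j ≤ n` in 1-based notation), and
`M[{1,…,k,i}; {1,…,k,j}]` etc. are realized as submatrices. -/
theorem sylvester_identity {R : Type*} [CommRing R] {n : ℕ}
    (M : Matrix (Fin n) (Fin n) R) (k : ℕ) (hk1 : 1 ≤ k) (hkn : k < n)
    (i j : Fin n) :
    (M.submatrix
        (fun s : Fin (k + 1) => if h : (s : ℕ) < k then (⟨s, h.trans hkn⟩ : Fin n) else i)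
        (fun s : Fin (k + 1) => if h : (s : ℕ) < k then (⟨s, h.trans hkn⟩ : Fin n) else j)).det
      * lead M (k - 1) (by omega)
    = (M.submatrix
        (fun s : Fin k => if (s : ℕ) < k - 1 then (⟨s, s.isLt.trans hkn⟩ : Fin n) else i)
        (fun s : Fin k => if (s : ℕ) < k - 1 then (⟨s, s.isLt.trans hkn⟩ : Fin n) else j)).det
      * lead M k hkn.le
    - (M.submatrix
        (fun s : Fin k => if (s : ℕ) < k - 1 then (⟨s, s.isLt.trans hkn⟩ : Fin n) else i)
        (fun s : Fin k => (⟨s, s.isLt.trans hkn⟩ : Fin n))).det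
      * (M.submatrix
        (fun s : Fin k => (⟨s, s.isLt.trans hkn⟩ : Fin n))
        (fun s : Fin k => if (s : ℕ) < k - 1 then (⟨s, s.isLt.trans hkn⟩ : Fin n) else j)).det := by
  obtain ⟨m, rfl⟩ : ∃ m, k = m + 1 := ⟨k - 1, by omega⟩
  let f : Fin m → Fin n := Fin.castLE (by omega)
  let a : Fin n := ⟨m, by omega⟩
  have hbordered (x : Fin n) : (fun s : Fin (m + 1 + 1) =>
      if h : (s : ℕ) < m + 1 then (⟨s, h.trans hkn⟩ : Fin n) else x) = Fin.snoc (Fin.snoc f a) x := by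
    funext s
    cases s using Fin.lastCases with
    | last => simp
    | cast s => cases s using Fin.lastCases <;> simp [f, a, Fin.ext_iff]
  have hbordered' (x : Fin n) : (fun s : Fin (m + 1) =>
      if (s : ℕ) < m + 1 - 1 then (⟨s, s.isLt.trans hkn⟩ : Fin n) else x) = Fin.snoc f x := by
    funext s
    cases s using Fin.lastCases <;> simp [f, Fin.ext_iff]
  have hlead : Fin.castLE hkn.le = Fin.snoc f a := by
    funext s
    cases s using Fin.lastCases <;> simp [f, a, Fin.ext_iff]
  have hcastLE : (fun s : Fin (m + 1) => (⟨s, s.isLt.trans hkn⟩ : Fin n)) = Fin.castLE hkn.le :=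
    rfl
  rw [hbordered, hbordered, hbordered', hbordered', hcastLE, lead, lead, hlead]
  -- `lead M (m + 1 - 1)` is a minor indexed by `Fin (m + 1 - 1)`, which reduces to `Fin m`.
  exact Matrix.det_submatrix_snoc_snoc_mul_det_submatrix M f f a i a j
end

section
/- Let F be a field, M an n×n matrix over F, and k ≥ 0 such that the leading principal minors Δ_1(M), …, Δ_k(M) are all nonzero. Define matrices M^{(1)} = M and, recursively for 1 ≤ s ≤ k, M^{(s+1)}_{ij} = M^{(s)}_{ij} − M^{(s)}_{is}·(M^{(s)}_{ss})⁻¹·M^{(s)}_{sj} for s < i, j ≤ n. Then for all k < i, j ≤ n, M^{(k+1)}_{ij} = det(M[{1,…,k,i}; {1,…,k,j}]) / det(M[{1,…,k}; {1,…,k}]). -/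
/-- `schur M s` is the matrix `M^{(s+1)}` of the Gelfand–Retakh recursion:
`M^{(1)} = M` and `M^{(s+1)}_{ij} = M^{(s)}_{ij} − M^{(s)}_{is}(M^{(s)}_{ss})⁻¹M^{(s)}_{sj}`
(the pivot of the step from `M^{(s)}` to `M^{(s+1)}` is the 1-based index `s`,
i.e. the 0-based index `s - 1`). -/
def schur {F : Type*} [Field F] {n : ℕ} (M : Matrix (Fin n) (Fin n) F) :
    ℕ → Matrix (Fin n) (Fin n) F
  | 0 => M
  | (s + 1) =>
    if h : s < n then
      Matrix.of fun a b =>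
        schur M s a b - schur M s a ⟨s, h⟩ * (schur M s ⟨s, h⟩ ⟨s, h⟩)⁻¹ * schur M s ⟨s, h⟩ b
    else schur M s

/-! The Schur complement `S = M - M[·, K] M[K, K]⁻¹ M[K, ·]` of the leading block on
`K = {0, …, k-1}` satisfies `det M[K ++ rows, K ++ cols] = Δ_k · det S[rows, cols]`
(block determinant formula). With one bordering index this gives
`B_k(i, j) = Δ_k · S i j` for the bordered minors `B_k`, and with two it gives Sylvester's
identity `Δ_k · B_{k+1}(i, j) = B_k(k, k) B_k(i, j) - B_k(i, k) B_k(k, j)`, where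
`B_k(k, k) = Δ_{k+1}`. Dividing by `Δ_k Δ_{k+1}`, this is exactly the recursion defining
`schur`, so induction on `k` closes the argument. -/

namespace Matrix

theorem submatrix_sumElim {l m n o p q α : Type*} (M : Matrix m n α) (u : l → m) (r : o → m)
    (v : p → n) (c : q → n) :
    M.submatrix (Sum.elim u r) (Sum.elim v c) =
      fromBlocks (M.submatrix u v) (M.submatrix u c) (M.submatrix r v) (M.submatrix r c) := by
  ext (a | a) (b | b) <;> rfl

variable {m κ ι R : Type*} [Fintype κ] [DecidableEq κ] [CommRing R]

noncomputable def schurComplement (M : Matrix m m R) (u : κ → m) : Matrix m m R :=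
  M - M.submatrix id u * (M.submatrix u u)⁻¹ * M.submatrix u id

theorem submatrix_schurComplement (M : Matrix m m R) (u : κ → m) (r c : ι → m) :
    (schurComplement M u).submatrix r c =
      M.submatrix r c - M.submatrix r u * (M.submatrix u u)⁻¹ * M.submatrix u c := by
  simp only [schurComplement, submatrix_sub, Pi.sub_apply,
    submatrix_mul (he₂ := Function.bijective_id), submatrix_submatrix, Function.id_comp,
    Function.comp_id, submatrix_id_id]

theorem det_submatrix_sumElim [Fintype ι] [DecidableEq ι] (M : Matrix m m R) {u : κ → m}
    (hu : IsUnit (M.submatrix u u).det) (r c : ι → m) :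
    (M.submatrix (Sum.elim u r) (Sum.elim u c)).det =
      (M.submatrix u u).det * ((schurComplement M u).submatrix r c).det := by
  let _ := (M.submatrix u u).invertibleOfIsUnitDet hu
  rw [submatrix_sumElim, det_fromBlocks₁₁, invOf_eq_nonsing_inv, submatrix_schurComplement]

end Matrix

open Matrix

theorem Fin.append_comp_finSumFinEquiv {α : Type*} {k l : ℕ} (u : Fin k → α) (v : Fin l → α) :
    Fin.append u v ∘ finSumFinEquiv = Sum.elim u v :=
  Fin.append_comp_sumElim

theorem Matrix.det_submatrix_append {m R : Type*} [CommRing R] {k l : ℕ} (M : Matrix m m R)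
    {u : Fin k → m} (hu : IsUnit (M.submatrix u u).det) (r c : Fin l → m) :
    (M.submatrix (Fin.append u r) (Fin.append u c)).det =
      (M.submatrix u u).det * ((schurComplement M u).submatrix r c).det := by
  rw [← det_submatrix_equiv_self finSumFinEquiv, submatrix_submatrix,
    Fin.append_comp_finSumFinEquiv, Fin.append_comp_finSumFinEquiv, det_submatrix_sumElim M hu]

section BorderedMinor

variable {F : Type*} [Field F] {n k : ℕ}

theorem Fin.castLE_succ_eq_append (hk : k < n) :
    Fin.castLE hk = Fin.append (Fin.castLE hk.le) ![(⟨k, hk⟩ : Fin n)] := by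
  ext s
  refine Fin.addCases (m := k) (n := 1) (fun s => ?_) (fun s => ?_) s
  · simp
  · simp [Subsingleton.elim s 0]

theorem Fin.append_castLE_succ_singleton (hk : k < n) (i : Fin n) :
    Fin.append (Fin.castLE hk) ![i] = Fin.append (Fin.castLE hk.le) ![⟨k, hk⟩, i] := by
  have hpair : Fin.append ![(⟨k, hk⟩ : Fin n)] ![i] = ![⟨k, hk⟩, i] := by
    ext s
    fin_cases s <;> rfl
  rw [Fin.castLE_succ_eq_append hk, Fin.append_assoc, hpair]
  rfl

theorem dite_castLE_eq_append (hk : k ≤ n) (i : Fin n) :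
    (fun s : Fin (k + 1) => if h : (s : ℕ) < k then (⟨s, h.trans_le hk⟩ : Fin n) else i) =
      Fin.append (Fin.castLE hk) ![i] := by
  ext s
  refine Fin.addCases (m := k) (n := 1) (fun s => ?_) (fun s => ?_) s
  · simp
  · simp [Subsingleton.elim s 0]

def borderedMinor (M : Matrix (Fin n) (Fin n) F) (hk : k ≤ n) (i j : Fin n) : F :=
  (M.submatrix (Fin.append (Fin.castLE hk) ![i]) (Fin.append (Fin.castLE hk) ![j])).det

theorem lead_zero (M : Matrix (Fin n) (Fin n) F) : lead M 0 (Nat.zero_le n) = 1 :=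
  det_isEmpty

theorem lead_ne_zero (M : Matrix (Fin n) (Fin n) F) (hk : k ≤ n)
    (hmin : ∀ m (hm : m < k), lead M (m + 1) (hm.trans_le hk) ≠ 0) : lead M k hk ≠ 0 := by
  cases k with
  | zero => simp [lead_zero]
  | succ k => exact hmin k k.lt_succ_self

theorem lead_succ_eq_borderedMinor (M : Matrix (Fin n) (Fin n) F) (hk : k < n) :
    lead M (k + 1) hk = borderedMinor M hk.le ⟨k, hk⟩ ⟨k, hk⟩ := by
  rw [lead, borderedMinor, Fin.castLE_succ_eq_append hk]

theorem borderedMinor_eq_lead_mul_schurComplement (M : Matrix (Fin n) (Fin n) F) {hk : k ≤ n}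
    (hΔ : lead M k hk ≠ 0) (i j : Fin n) :
    borderedMinor M hk i j = lead M k hk * schurComplement M (Fin.castLE hk) i j := by
  rw [borderedMinor, det_submatrix_append M (isUnit_iff_ne_zero.2 hΔ), det_fin_one]
  rfl

theorem lead_mul_borderedMinor_succ (M : Matrix (Fin n) (Fin n) F) (hk : k < n)
    (hΔ : lead M k hk.le ≠ 0) (i j : Fin n) :
    lead M k hk.le * borderedMinor M hk i j =
      borderedMinor M hk.le ⟨k, hk⟩ ⟨k, hk⟩ * borderedMinor M hk.le i j -
        borderedMinor M hk.le i ⟨k, hk⟩ * borderedMinor M hk.le ⟨k, hk⟩ j := by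
  simp only [borderedMinor_eq_lead_mul_schurComplement M hΔ]
  unfold lead
  rw [borderedMinor, Fin.append_castLE_succ_singleton, Fin.append_castLE_succ_singleton,
    det_submatrix_append M (isUnit_iff_ne_zero.2 hΔ), det_fin_two]
  simp only [submatrix_apply, Matrix.cons_val_zero, Matrix.cons_val_one]
  ring

theorem schur_succ_apply (M : Matrix (Fin n) (Fin n) F) (hk : k < n) (a b : Fin n) :
    schur M (k + 1) a b =
      schur M k a b - schur M k a ⟨k, hk⟩ * (schur M k ⟨k, hk⟩ ⟨k, hk⟩)⁻¹ * schur M k ⟨k, hk⟩ b := by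
  rw [schur, dif_pos hk]
  rfl

theorem schur_apply_eq_borderedMinor_div_lead (M : Matrix (Fin n) (Fin n) F) :
    ∀ {k : ℕ} (hk : k ≤ n), (∀ m (hm : m < k), lead M (m + 1) (hm.trans_le hk) ≠ 0) →
      ∀ i j : Fin n, k ≤ (i : ℕ) → k ≤ (j : ℕ) →
        schur M k i j = borderedMinor M hk i j / lead M k hk
  | 0, hk, _, i, j, _, _ => by
    rw [lead_zero, div_one, borderedMinor, det_fin_one]
    rfl
  | k + 1, hk, hmin, i, j, hi, hj => by
    have hk' : k ≤ n := Nat.le_of_succ_le hk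
    have hmin' : ∀ m (hm : m < k), lead M (m + 1) (hm.trans_le hk') ≠ 0 :=
      fun m hm => hmin m (hm.trans k.lt_succ_self)
    have ih := schur_apply_eq_borderedMinor_div_lead M hk' hmin'
    rw [schur_succ_apply M hk, lead_succ_eq_borderedMinor M hk]
    set p : Fin n := ⟨k, hk⟩
    have hΔ : lead M k hk' ≠ 0 := lead_ne_zero M hk' hmin'
    have hΔp : borderedMinor M hk' p p ≠ 0 :=
      lead_succ_eq_borderedMinor M hk ▸ hmin k k.lt_succ_self
    have hi' : k ≤ (i : ℕ) := Nat.le_of_succ_le hi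
    have hj' : k ≤ (j : ℕ) := Nat.le_of_succ_le hj
    rw [ih i j hi' hj', ih i p hi' le_rfl, ih p p le_rfl le_rfl, ih p j le_rfl hj']
    field_simp
    rw [lead_mul_borderedMinor_succ M hk hΔ]
    ring

end BorderedMinor

theorem schur_eq_ratio_of_minors {F : Type*} [Field F] {n : ℕ}
    (M : Matrix (Fin n) (Fin n) F) (k : ℕ) (hkn : k ≤ n)
    (hmin : ∀ (m : ℕ) (hm : m < k), lead M (m + 1) (by omega) ≠ 0) :
    ∀ (i j : Fin n), k ≤ (i : ℕ) → k ≤ (j : ℕ) →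
      schur M k i j =
        (M.submatrix
            (fun s : Fin (k + 1) =>
              if h : (s : ℕ) < k then (⟨s, h.trans_le hkn⟩ : Fin n) else i)
            (fun s : Fin (k + 1) =>
              if h : (s : ℕ) < k then (⟨s, h.trans_le hkn⟩ : Fin n) else j)).det
          / lead M k hkn := by
  intro i j hi hj
  rw [dite_castLE_eq_append hkn i, dite_castLE_eq_append hkn j]
  exact schur_apply_eq_borderedMinor_div_lead M hkn hmin i j hi hj
end

section
/- Let ε be a skew-symmetric n×n matrix with rational entries and let k be a fixed index. Define the mutated matrix μ_k(ε) by (μ_k ε)_{ij} = −ε_{ij} if i = k or j = k, and (μ_k ε)_{ij} = ε_{ij} + [ε_{ik}]_+[ε_{kj}]_+ − [−ε_{ik}]_+[−ε_{kj}]_+ otherwise, where [x]_+ = max(x, 0). Define J ∈ Mat_n(ℚ) by J_{kk} = −1, J_{ik} = [ε_{ik}]_+ for i ≠ k, J_{ii} = 1 for i ≠ k, and J_{ij} = 0 otherwise. Then μ_k(ε) = J·ε·Jᵀ; in particular J is invertible and rank(μ_k ε) = rank(ε), and μ_k(ε) is again skew-symmetric. -/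
open Matrix

/-- Fomin–Zelevinsky matrix mutation of a skew-symmetric exchange matrix in direction `k`,
where `[x]_+ = max x 0`. -/
def mutMat {n : ℕ} (ε : Matrix (Fin n) (Fin n) ℚ) (k : Fin n) : Matrix (Fin n) (Fin n) ℚ :=
  Matrix.of fun a c =>
    if a = k ∨ c = k then -ε a c
    else ε a c + max (ε a k) 0 * max (ε k c) 0 - max (-ε a k) 0 * max (-ε k c) 0

/-- The matrix `J` with `J_{kk} = −1`, `J_{ik} = [ε_{ik}]_+` for `i ≠ k`,
`J_{ii} = 1` for `i ≠ k`, and all other entries `0`. -/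
def Jmat {n : ℕ} (ε : Matrix (Fin n) (Fin n) ℚ) (k : Fin n) : Matrix (Fin n) (Fin n) ℚ :=
  Matrix.of fun a c =>
    if a = k ∧ c = k then -1
    else if c = k then max (ε a k) 0
    else if a = c then 1 else 0


/-!
Row `a ≠ k` of `J` is `e_a + [ε_{ak}]_+ e_k` and row `k` is `-e_k`, so left multiplication by `J`
adds `[ε_{ak}]_+` times row `k` to each row `a ≠ k` and negates row `k`; in particular `J² = 1`.
Conjugating `ε` by `J` and expanding, the entry at `a, c ≠ k` becomes
`ε_{ac} + [x]_+ y + x [-y]_+` with `x = ε_{ak}`, `y = ε_{kc} = -ε_{ck}`, which equals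
`ε_{ac} + [x]_+ [y]_+ - [-x]_+ [-y]_+` because `x = [x]_+ - [-x]_+`. Rank and skew-symmetry are
preserved by any congruence `M ↦ A M Aᵀ` with `A` invertible.
-/

namespace Matrix

variable {m R : Type*}

theorem diag_eq_zero_of_transpose_eq_neg [Ring R] [IsAddTorsionFree R] {M : Matrix m m R}
    (hM : Mᵀ = -M) (i : m) : M i i = 0 :=
  self_eq_neg.mp (congrFun (congrFun hM i) i)

theorem transpose_mul_mul_transpose_eq_neg [Fintype m] [CommRing R] (A : Matrix m m R)
    {M : Matrix m m R} (hM : Mᵀ = -M) : (A * M * Aᵀ)ᵀ = -(A * M * Aᵀ) := by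
  rw [transpose_mul, transpose_mul, transpose_transpose, hM, Matrix.neg_mul, Matrix.mul_neg,
    Matrix.mul_assoc]

theorem rank_mul_mul_transpose_of_isUnit [Fintype m] [DecidableEq m] [CommRing R]
    {A : Matrix m m R} (hA : IsUnit A) (M : Matrix m m R) : (A * M * Aᵀ).rank = M.rank := by
  have hdet : IsUnit A.det := (isUnit_iff_isUnit_det A).mp hA
  rw [rank_mul_eq_left_of_isUnit_det _ _ (by rwa [det_transpose]),
    rank_mul_eq_right_of_isUnit_det _ _ hdet]

end Matrix

theorem max_zero_mul_add_mul_max_neg_zero {α : Type*} [CommRing α] [LinearOrder α]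
    [AddLeftMono α] (x y : α) :
    max x 0 * y + x * max (-y) 0 = max x 0 * max y 0 - max (-x) 0 * max (-y) 0 := by
  linear_combination (-max x 0) * max_zero_sub_max_neg_zero_eq_self y +
    (-max (-y) 0) * max_zero_sub_max_neg_zero_eq_self x

section Jmat

variable {n : ℕ} (ε : Matrix (Fin n) (Fin n) ℚ) (k : Fin n)

theorem Jmat_apply (a c : Fin n) :
    Jmat ε k a c = if a = k ∧ c = k then -1
      else if c = k then max (ε a k) 0
      else if a = c then 1 else 0 := rfl

theorem Jmat_mul_apply_self (M : Matrix (Fin n) (Fin n) ℚ) (c : Fin n) :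
    (Jmat ε k * M) k c = -M k c := by
  rw [Matrix.mul_apply, Finset.sum_eq_single k]
  · simp [Jmat_apply]
  · intro b _ hb
    simp [Jmat_apply, hb, Ne.symm hb]
  · simp

theorem Jmat_mul_apply_of_ne (M : Matrix (Fin n) (Fin n) ℚ) {a : Fin n} (ha : a ≠ k)
    (c : Fin n) : (Jmat ε k * M) a c = M a c + max (ε a k) 0 * M k c := by
  have hzero : ∀ b ∉ ({a, k} : Finset (Fin n)), Jmat ε k a b * M b c = 0 := by
    intro b hb
    simp only [Finset.mem_insert, Finset.mem_singleton, not_or] at hb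
    simp [Jmat_apply, ha, hb.2, Ne.symm hb.1]
  rw [Matrix.mul_apply, ← Finset.sum_subset (Finset.subset_univ _) fun b _ => hzero b,
    Finset.sum_pair ha]
  simp [Jmat_apply, ha]

theorem mul_Jmat_transpose_apply (M : Matrix (Fin n) (Fin n) ℚ) (a c : Fin n) :
    (M * (Jmat ε k)ᵀ) a c = (Jmat ε k * Mᵀ) c a := by
  rw [← Matrix.transpose_apply (Jmat ε k * Mᵀ), Matrix.transpose_mul, Matrix.transpose_transpose]

theorem Jmat_mul_self : Jmat ε k * Jmat ε k = 1 := by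
  ext a c
  by_cases ha : a = k
  · rw [ha, Jmat_mul_apply_self]
    by_cases hc : c = k
    · simp [Jmat_apply, hc, Matrix.one_apply]
    · simp [Jmat_apply, hc, Ne.symm hc]
  · rw [Jmat_mul_apply_of_ne ε k _ ha]
    by_cases hc : c = k
    · simp [Jmat_apply, hc, ha]
    · simp [Jmat_apply, hc, Ne.symm hc, ha, Matrix.one_apply]

theorem isUnit_Jmat : IsUnit (Jmat ε k) :=
  ⟨⟨Jmat ε k, Jmat ε k, Jmat_mul_self ε k, Jmat_mul_self ε k⟩, rfl⟩

theorem mutMat_eq_Jmat_mul_mul_transpose (hskew : εᵀ = -ε) :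
    mutMat ε k = Jmat ε k * ε * (Jmat ε k)ᵀ := by
  have hkk : ε k k = 0 := Matrix.diag_eq_zero_of_transpose_eq_neg hskew k
  ext a c
  rw [mul_Jmat_transpose_apply]
  by_cases hc : c = k
  · rw [hc, Jmat_mul_apply_self, Matrix.transpose_apply]
    by_cases ha : a = k
    · simp [ha, Jmat_mul_apply_self, mutMat, hkk]
    · simp [Jmat_mul_apply_of_ne ε k _ ha, mutMat, hkk]
  · rw [Jmat_mul_apply_of_ne ε k _ hc, Matrix.transpose_apply, Matrix.transpose_apply]
    by_cases ha : a = k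
    · simp [ha, Jmat_mul_apply_self, mutMat, hkk]
    · have hck : ε c k = -ε k c := by
        simpa using congrFun (congrFun hskew k) c
      simp only [Jmat_mul_apply_of_ne ε k _ ha, mutMat, Matrix.of_apply, ha, hc, or_self,
        if_false, hkk, hck, mul_zero, add_zero]
      linear_combination -max_zero_mul_add_mul_max_neg_zero (ε a k) (ε k c)

end Jmat

theorem mutation_conjugation {n : ℕ} (ε : Matrix (Fin n) (Fin n) ℚ)
    (hskew : εᵀ = -ε) (k : Fin n) :
    mutMat ε k = Jmat ε k * ε * (Jmat ε k)ᵀ ∧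
    IsUnit (Jmat ε k) ∧
    (mutMat ε k).rank = ε.rank ∧
    (mutMat ε k)ᵀ = -(mutMat ε k) := by
  have hconj := mutMat_eq_Jmat_mul_mul_transpose ε k hskew
  refine ⟨hconj, isUnit_Jmat ε k, ?_, ?_⟩
  · rw [hconj, Matrix.rank_mul_mul_transpose_of_isUnit (isUnit_Jmat ε k)]
  · rw [hconj, Matrix.transpose_mul_mul_transpose_eq_neg _ hskew]
end
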